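/- If r divides h and V is the collection of all r-subsets of [h], then V is resolvable; moreover the number of parallel classes is binomial(h-1, r-1). -/

import Mathlib

open Finset

namespace Baranyai

variable {h r : ℕ}

/-- first `m` elements of `Fin h` -/
def Dm (h m : ℕ) : Finset (Fin h) := Finset.univ.filter (fun x => x.val < m)

lemma mem_Dm {m : ℕ} {x : Fin h} : x ∈ Dm h m ↔ x.val < m := by
  simp [Dm]

lemma Dm_mono {m : ℕ} : Dm h m ⊆ Dm h (m+1) := by
  intro x hx; rw [mem_Dm] at *; omega

lemma card_Dm {m : ℕ} (hm : m ≤ h) : (Dm h m).card = m := by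
  rw [Dm]
  rw [Finset.card_filter]
  rw [Fin.sum_univ_eq_sum_range (fun i => if i < m then 1 else 0)]
  rw [← Finset.card_filter]
  have : Finset.filter (fun i => i < m) (Finset.range h) = Finset.range m := by
    ext i; simp; omega
  rw [this, Finset.card_range]

lemma Dm_top : Dm h h = Finset.univ := by
  ext x; simp [mem_Dm, x.isLt]

def cnt (h r m : ℕ) (S : Finset (Fin h)) : ℕ :=
  if S.card ≤ r then (h - m).choose (r - S.card) else 0

end Baranyai

namespace Baranyai2
end Baranyai2

namespace Baranyai

abbrev NC (h r : ℕ) : ℕ := (h-1).choose (r-1)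

def Good (h r m : ℕ) (F : Fin (NC h r) → Multiset (Finset (Fin h))) : Prop :=
  (∀ i, Multiset.card (F i) = h / r) ∧
  (∀ i, ∀ P ∈ F i, P ⊆ Dm h m) ∧
  (∀ i, ∀ x ∈ Dm h m, Multiset.countP (fun P => x ∈ P) (F i) = 1) ∧
  (∀ S : Finset (Fin h), S ⊆ Dm h m → (∑ i, (F i).count S) = cnt h r m S)

lemma NC_mul (hr : 0 < r) (hdvd : r ∣ h) : NC h r * (h / r) = h.choose r := by
  rcases Nat.eq_zero_or_pos h with hh | hh
  · subst hh; simp [NC, Nat.choose_eq_zero_of_lt hr]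
  · obtain ⟨h', rfl⟩ : ∃ h', h = h' + 1 := ⟨h - 1, by omega⟩
    obtain ⟨r', rfl⟩ : ∃ r', r = r' + 1 := ⟨r - 1, by omega⟩
    have key := Nat.add_one_mul_choose_eq h' r'
    -- (h'+1) * choose h' r' = choose (h'+1) (r'+1) * (r'+1)
    have hd : (r' + 1) * ((h' + 1) / (r' + 1)) = h' + 1 := Nat.mul_div_cancel' hdvd
    have : NC (h'+1) (r'+1) * ((r'+1) * ((h'+1) / (r'+1))) = (h'+1).choose (r'+1) * (r'+1) := by
      rw [hd, NC]
      simpa [Nat.mul_comm] using key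
    have h2 : NC (h'+1) (r'+1) * ((h'+1) / (r'+1)) * (r'+1) = (h'+1).choose (r'+1) * (r'+1) := by
      rw [← this]; ring
    exact Nat.eq_of_mul_eq_mul_right (Nat.succ_pos r') h2

lemma good_zero (hr : 0 < r) (hdvd : r ∣ h) :
    Good h r 0 (fun _ => Multiset.replicate (h / r) (∅ : Finset (Fin h))) := by
  refine ⟨fun i => by simp, fun i P hP => ?_, fun i x hx => by simp [mem_Dm] at hx, fun S hS => ?_⟩
  · rw [Multiset.eq_of_mem_replicate hP]; simp
  · have hS0 : S = ∅ := Finset.eq_empty_of_forall_notMem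
      (fun x hx => absurd (hS hx) (by simp [mem_Dm]))
    subst hS0
    simp only [Multiset.count_replicate_self, Finset.sum_const, Finset.card_univ,
      Fintype.card_fin, smul_eq_mul]
    rw [cnt]
    simp only [Finset.card_empty, if_pos (Nat.zero_le r), Nat.sub_zero]
    exact NC_mul hr hdvd

lemma sum_map_ite_count {α : Type*} (p : α → Prop) [DecidablePred p] (s : Multiset α) :
    (s.map (fun a => if p a then (1:ℕ) else 0)).sum = s.countP p := by
  induction s using Multiset.induction with
  | empty => simp
  | cons a s ih => by_cases hp : p a <;> simp [Multiset.countP_cons, hp, ih] <;> omega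

lemma wsum_eq {α : Type*} [DecidableEq α] (F : Multiset α) (U : Finset α) (hU : F.toFinset ⊆ U)
    (w : α → ℕ) : ∑ S ∈ U, F.count S * w S = (F.map w).sum := by
  rw [Finset.sum_multiset_map_count]
  rw [Finset.sum_subset hU]
  · simp
  · intro x _ hx
    rw [Multiset.count_eq_zero.2 (by simpa using hx)]
    simp

variable (hr : 0 < r) (hdvd : r ∣ h)

lemma class_card_le {m : ℕ} {F : Fin (NC h r) → Multiset (Finset (Fin h))}
    (hG : Good h r m F) {i : Fin (NC h r)} {P : Finset (Fin h)} (hP : P ∈ F i) : P.card ≤ r := by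
  by_contra hc
  have h0 : ∑ j, (F j).count P = 0 := by
    rw [hG.2.2.2 P (hG.2.1 i P hP), cnt, if_neg (by omega)]
  have h1 : 0 < (F i).count P := Multiset.count_pos.2 hP
  have := Finset.sum_eq_zero_iff.1 h0 i (Finset.mem_univ i)
  omega

lemma class_sum_card {m : ℕ} (hm : m ≤ h) {F : Fin (NC h r) → Multiset (Finset (Fin h))}
    (hG : Good h r m F) (i : Fin (NC h r)) :
    ((F i).map Finset.card).sum = m := by
  have step1 : ((F i).map Finset.card).sum
      = ((F i).map (fun P => ∑ x ∈ Dm h m, if x ∈ P then (1:ℕ) else 0)).sum := by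
    congr 1
    apply Multiset.map_congr rfl
    intro P hP
    rw [Finset.sum_ite_mem, Finset.sum_const, Finset.inter_eq_right.2 (hG.2.1 i P hP)]
    simp
  rw [step1]
  have step2 : ((F i).map (fun P => ∑ x ∈ Dm h m, if x ∈ P then (1:ℕ) else 0)).sum
      = ∑ x ∈ Dm h m, ((F i).map (fun P => if x ∈ P then (1:ℕ) else 0)).sum := by
    simp only [Finset.sum, Multiset.map_map, Function.comp]
    exact Multiset.sum_map_sum_map (F i) (Dm h m).val
  rw [step2]
  have step3 : ∀ x ∈ Dm h m, ((F i).map (fun P => if x ∈ P then (1:ℕ) else 0)).sum = 1 := by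
    intro x hx
    rw [sum_map_ite_count]
    exact hG.2.2.1 i x hx
  rw [Finset.sum_congr rfl step3, Finset.sum_const, card_Dm hm]
  simp

lemma class_sum_slack {m : ℕ} (hm : m ≤ h) (hr : 0 < r) (hdvd : r ∣ h)
    {F : Fin (NC h r) → Multiset (Finset (Fin h))}
    (hG : Good h r m F) (i : Fin (NC h r)) :
    ((F i).map (fun P => r - P.card)).sum = h - m := by
  have key : ((F i).map (fun P => r - P.card)).sum + ((F i).map Finset.card).sum = h := by
    rw [← Multiset.sum_map_add]
    have : ((F i).map (fun P => (r - P.card) + P.card)).sum = ((F i).map (fun _ => r)).sum := by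
      congr 1
      apply Multiset.map_congr rfl
      intro P hP
      exact Nat.sub_add_cancel (class_card_le hG hP)
    rw [this, Multiset.map_const', Multiset.sum_replicate, hG.1 i, smul_eq_mul,
      Nat.div_mul_cancel hdvd]
  rw [class_sum_card hm hG i] at key
  omega

/-- the number of copies of `S` that should receive the new element -/
def dd (h r m : ℕ) (S : Finset (Fin h)) : ℕ :=
  if S.card < r then (h - m - 1).choose (r - 1 - S.card) else 0

lemma dd_mul (m : ℕ) (hm : m < h) (S : Finset (Fin h)) (hS : S.card < r) :
    dd h r m S * (h - m) = cnt h r m S * (r - S.card) := by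
  rw [dd, if_pos hS, cnt, if_pos hS.le]
  obtain ⟨a, ha⟩ : ∃ a, h - m = a + 1 := ⟨h - m - 1, by omega⟩
  obtain ⟨b, hb⟩ : ∃ b, r - S.card = b + 1 := ⟨r - S.card - 1, by omega⟩
  have e1 : h - m - 1 = a := by omega
  have e2 : r - 1 - S.card = b := by omega
  rw [e1, e2, ha, hb]
  have key := Nat.add_one_mul_choose_eq a b
  rw [Nat.mul_comm]
  exact key

lemma pascal (m : ℕ) (hm : m < h) (S : Finset (Fin h)) :
    cnt h r m S = cnt h r (m+1) S + dd h r m S := by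
  rcases lt_trichotomy S.card r with hc | hc | hc
  · rw [cnt, if_pos hc.le, cnt, if_pos hc.le, dd, if_pos hc]
    obtain ⟨a, ha⟩ : ∃ a, h - m = a + 1 := ⟨h - m - 1, by omega⟩
    obtain ⟨b, hb⟩ : ∃ b, r - S.card = b + 1 := ⟨r - S.card - 1, by omega⟩
    have e1 : h - (m+1) = a := by omega
    have e1' : h - m - 1 = a := by omega
    have e2 : r - 1 - S.card = b := by omega
    rw [e1, e1', e2, ha, hb, Nat.choose_succ_succ]
    simp only [Nat.succ_eq_add_one]
    omega
  · rw [cnt, if_pos hc.le, cnt, if_pos hc.le, dd, if_neg (by omega), hc]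
    simp
  · rw [cnt, if_neg (by omega), cnt, if_neg (by omega), dd, if_neg (by omega)]

lemma card_slots (B : Finset (Finset (Fin h))) (d : Finset (Fin h) → ℕ) :
    (B.biUnion (fun S => {S} ×ˢ Finset.range (d S))).card = ∑ S ∈ B, d S := by
  rw [Finset.card_biUnion]
  · apply Finset.sum_congr rfl
    intro S _
    rw [Finset.card_product]
    simp
  · intro A _ B _ hAB
    simp only [Finset.disjoint_left]
    intro p hp hp'
    simp only [Finset.mem_product, Finset.mem_singleton] at hp hp'
    exact hAB (hp.1.symm.trans hp'.1)

lemma step (hr : 0 < r) (hdvd : r ∣ h) {m : ℕ} (hm : m < h)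
    {F : Fin (NC h r) → Multiset (Finset (Fin h))} (hG : Good h r m F) :
    ∃ F' : Fin (NC h r) → Multiset (Finset (Fin h)), Good h r (m+1) F' := by
  classical
  set x : Fin h := ⟨m, hm⟩ with hx
  set d : Finset (Fin h) → ℕ := dd h r m with hd
  set t : Fin (NC h r) → Finset (Finset (Fin h) × ℕ) := fun i =>
    ((F i).toFinset.filter (fun S => S.card < r)).biUnion
      (fun S => {S} ×ˢ Finset.range (d S)) with ht
  have hmh : 0 < h - m := by omega
  -- the weighted slack sum over any superset of class parts
  have class_wsum : ∀ (i : Fin (NC h r)) (U : Finset (Finset (Fin h))),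
      (F i).toFinset ⊆ U → ∑ S ∈ U, (F i).count S * (r - S.card) = h - m := by
    intro i U hU
    rw [wsum_eq (F i) U hU (fun S => r - S.card)]
    exact class_sum_slack hm.le hr hdvd hG i
  -- key inequality used for Hall's condition
  have key : ∀ (T : Finset (Fin (NC h r))) (B : Finset (Finset (Fin h))),
      (∀ i ∈ T, ((F i).toFinset.filter (fun S => S.card < r)) ⊆ B) →
      (∀ S ∈ B, S ⊆ Dm h m ∧ S.card < r) →
      T.card ≤ ∑ S ∈ B, d S := by
    intro T B hB hBp
    apply Nat.le_of_mul_le_mul_right _ hmh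
    calc T.card * (h - m) = ∑ i ∈ T, (h - m) := by rw [Finset.sum_const, smul_eq_mul]
      _ = ∑ i ∈ T, ∑ S ∈ B, (F i).count S * (r - S.card) := by
          apply Finset.sum_congr rfl
          intro i hi
          have hsub : B ⊆ (F i).toFinset ∪ B := fun a ha => Finset.mem_union_right _ ha
          have hzero : ∀ S ∈ (F i).toFinset ∪ B, S ∉ B →
              (F i).count S * (r - S.card) = 0 := by
            intro S hSU hSB
            rcases Finset.mem_union.1 hSU with hS | hS
            · have hcard : ¬ S.card < r := fun hc =>
                hSB (hB i hi (Finset.mem_filter.2 ⟨hS, hc⟩))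
              have : r - S.card = 0 := by omega
              rw [this, Nat.mul_zero]
            · exact absurd hS hSB
          rw [← class_wsum i ((F i).toFinset ∪ B)
            (fun a ha => Finset.mem_union_left _ ha)]
          exact (Finset.sum_subset hsub hzero).symm
      _ = ∑ S ∈ B, (∑ i ∈ T, (F i).count S) * (r - S.card) := by
          rw [Finset.sum_comm]
          apply Finset.sum_congr rfl
          intro S _
          rw [Finset.sum_mul]
      _ ≤ ∑ S ∈ B, (∑ i, (F i).count S) * (r - S.card) := by
          apply Finset.sum_le_sum
          intro S _
          exact Nat.mul_le_mul_right _
            (Finset.sum_le_sum_of_subset (Finset.subset_univ T))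
      _ = ∑ S ∈ B, cnt h r m S * (r - S.card) := by
          apply Finset.sum_congr rfl
          intro S hS
          rw [hG.2.2.2 S (hBp S hS).1]
      _ = ∑ S ∈ B, d S * (h - m) := by
          apply Finset.sum_congr rfl
          intro S hS
          rw [dd_mul m hm S (hBp S hS).2]
      _ = (∑ S ∈ B, d S) * (h - m) := by rw [Finset.sum_mul]
  -- Hall's condition
  have hall : ∀ T : Finset (Fin (NC h r)), T.card ≤ (T.biUnion t).card := by
    intro T
    have : T.biUnion t = (T.biUnion (fun i => (F i).toFinset.filter (fun S => S.card < r))).biUnion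
        (fun S => {S} ×ˢ Finset.range (d S)) := by
      rw [Finset.biUnion_biUnion]
    rw [this, card_slots]
    apply key
    · intro i hi
      exact Finset.subset_biUnion_of_mem
        (fun j => (F j).toFinset.filter (fun S => S.card < r)) hi
    · intro S hS
      simp only [Finset.mem_biUnion, Finset.mem_filter, Multiset.mem_toFinset] at hS
      obtain ⟨i, _, hSF, hSc⟩ := hS
      exact ⟨hG.2.1 i S hSF, hSc⟩
  obtain ⟨f, hfinj, hft⟩ := (Finset.all_card_le_biUnion_card_iff_exists_injective t).1 hall
  -- unpack the choice
  have hfx : ∀ i, (f i).1 ∈ F i ∧ (f i).1.card < r ∧ (f i).2 < d (f i).1 := by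
    intro i
    have := hft i
    simp only [ht, Finset.mem_biUnion, Finset.mem_filter, Multiset.mem_toFinset,
      Finset.mem_product, Finset.mem_singleton, Finset.mem_range] at this
    obtain ⟨S, ⟨hSF, hSc⟩, hfs, hfr⟩ := this
    rw [← hfs] at hSF hSc hfr
    exact ⟨hSF, hSc, hfr⟩
  set g : Fin (NC h r) → Finset (Fin h) := fun i => (f i).1 with hg
  -- count of classes choosing S equals d S
  have hcount : ∀ S : Finset (Fin h), S ⊆ Dm h m →
      (Finset.univ.filter (fun i => g i = S)).card = d S := by
    set U : Finset (Finset (Fin h)) :=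
      ((Dm h m).powerset.filter (fun S => S.card < r)) with hU
    have hUmem : ∀ S ∈ U, S ⊆ Dm h m ∧ S.card < r := by
      intro S hS
      simp only [hU, Finset.mem_filter, Finset.mem_powerset] at hS
      exact hS
    -- total number of slots equals the number of classes
    have hUsum : ∑ S ∈ U, d S = NC h r := by
      apply Nat.eq_of_mul_eq_mul_right hmh
      calc (∑ S ∈ U, d S) * (h - m) = ∑ S ∈ U, d S * (h - m) := Finset.sum_mul _ _ _
        _ = ∑ S ∈ U, cnt h r m S * (r - S.card) := by
            apply Finset.sum_congr rfl
            intro S hS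
            exact dd_mul m hm S (hUmem S hS).2
        _ = ∑ S ∈ U, (∑ i, (F i).count S) * (r - S.card) := by
            apply Finset.sum_congr rfl
            intro S hS
            rw [hG.2.2.2 S (hUmem S hS).1]
        _ = ∑ i, ∑ S ∈ U, (F i).count S * (r - S.card) := by
            rw [Finset.sum_comm]
            apply Finset.sum_congr rfl
            intro S _
            rw [Finset.sum_mul]
        _ = ∑ i : Fin (NC h r), (h - m) := by
            apply Finset.sum_congr rfl
            intro i _
            have hsub : U ⊆ (Dm h m).powerset := Finset.filter_subset _ _
            have hzero : ∀ S ∈ (Dm h m).powerset, S ∉ U →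
                (F i).count S * (r - S.card) = 0 := by
              intro S hSP hSU
              have hge : ¬ S.card < r := by
                intro hlt
                exact hSU (Finset.mem_filter.2 ⟨hSP, hlt⟩)
              by_cases hmem : S ∈ F i
              · have : r - S.card = 0 :=
                  Nat.sub_eq_zero_of_le (Nat.le_of_not_lt hge |>.trans
                    (le_of_eq rfl) |>.trans (le_refl _) |>.trans (le_refl _) |> (fun _ => by
                      have := class_card_le hG hmem; omega))
                rw [this, Nat.mul_zero]
              · rw [Multiset.count_eq_zero.2 hmem, Nat.zero_mul]
            rw [Finset.sum_subset hsub hzero]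
            apply class_wsum i
            intro S hS
            exact Finset.mem_powerset.2 (hG.2.1 i S (Multiset.mem_toFinset.1 hS))
        _ = NC h r * (h - m) := by
            rw [Finset.sum_const, Finset.card_univ, Fintype.card_fin, smul_eq_mul]
    set slots : Finset (Finset (Fin h) × ℕ) :=
      U.biUnion (fun S => {S} ×ˢ Finset.range (d S)) with hslots
    have hslots_card : slots.card = NC h r := by
      rw [hslots, card_slots, hUsum]
    have htsub : ∀ i, t i ⊆ slots := by
      intro i p hp
      simp only [ht, Finset.mem_biUnion, Finset.mem_filter, Multiset.mem_toFinset] at hp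
      obtain ⟨S, ⟨hSF, hSc⟩, hpS⟩ := hp
      refine Finset.mem_biUnion.2 ⟨S, ?_, hpS⟩
      exact Finset.mem_filter.2 ⟨Finset.mem_powerset.2 (hG.2.1 i S hSF), hSc⟩
    have himgsub : Finset.univ.image f ⊆ slots := by
      intro p hp
      obtain ⟨i, _, rfl⟩ := Finset.mem_image.1 hp
      exact htsub i (hft i)
    have himg : Finset.univ.image f = slots := by
      apply Finset.eq_of_subset_of_card_le himgsub
      rw [hslots_card, Finset.card_image_of_injective _ hfinj, Finset.card_univ,
        Fintype.card_fin]
    intro S hSD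
    by_cases hSr : S.card < r
    · have hSU : S ∈ U := Finset.mem_filter.2 ⟨Finset.mem_powerset.2 hSD, hSr⟩
      have himg2 : (Finset.univ.filter (fun i => g i = S)).image f
          = {S} ×ˢ Finset.range (d S) := by
        apply Finset.Subset.antisymm
        · intro p hp
          obtain ⟨i, hi, rfl⟩ := Finset.mem_image.1 hp
          have hgi : g i = S := (Finset.mem_filter.1 hi).2
          have hfi := hfx i
          refine Finset.mem_product.2 ⟨Finset.mem_singleton.2 ?_, Finset.mem_range.2 ?_⟩
          · exact hgi
          · rw [← hgi]; exact hfi.2.2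
        · intro p hp
          have hp' : p ∈ slots := Finset.mem_biUnion.2 ⟨S, hSU, hp⟩
          rw [← himg] at hp'
          obtain ⟨i, _, rfl⟩ := Finset.mem_image.1 hp'
          have hp1 : (f i).1 = S := Finset.mem_singleton.1 (Finset.mem_product.1 hp).1
          exact Finset.mem_image.2 ⟨i, Finset.mem_filter.2 ⟨Finset.mem_univ i, hp1⟩, rfl⟩
      have := congrArg Finset.card himg2
      rw [Finset.card_image_of_injective _ hfinj, Finset.card_product,
        Finset.card_singleton, Finset.card_range, Nat.one_mul] at this
      exact this
    · have hempty : Finset.univ.filter (fun i => g i = S) = ∅ := by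
        apply Finset.eq_empty_of_forall_notMem
        intro i hi
        have hgi : g i = S := (Finset.mem_filter.1 hi).2
        exact hSr (hgi ▸ (hfx i).2.1)
      rw [hempty, Finset.card_empty, hd, dd, if_neg hSr]
  -- construct the new family
  have hgF : ∀ i, g i ∈ F i := fun i => (hfx i).1
  have hgc : ∀ i, (g i).card < r := fun i => (hfx i).2.1
  have hgD : ∀ i, g i ⊆ Dm h m := fun i => hG.2.1 i _ (hgF i)
  have hxval : (x : Fin h).val = m := rfl
  have hxD : (x : Fin h) ∉ Dm h m := by simp [mem_Dm, hx]
  have hxg : ∀ i, (x : Fin h) ∉ g i := fun i hc => hxD (hgD i hc)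
  have hcons : ∀ i, g i ::ₘ (F i).erase (g i) = F i := fun i => Multiset.cons_erase (hgF i)
  refine ⟨fun i => insert x (g i) ::ₘ (F i).erase (g i), ?_, ?_, ?_, ?_⟩
  · -- cardinality of each class
    intro i
    have := congrArg Multiset.card (hcons i)
    rw [Multiset.card_cons] at this
    rw [Multiset.card_cons, this]
    exact hG.1 i
  · -- parts are inside Dm (m+1)
    intro i P hP
    rcases Multiset.mem_cons.1 hP with rfl | hP'
    · intro y hy
      rcases Finset.mem_insert.1 hy with rfl | hy'
      · rw [mem_Dm]; omega
      · exact Dm_mono (hgD i hy')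
    · exact fun y hy => Dm_mono (hG.2.1 i P (Multiset.mem_of_mem_erase hP') hy)
  · -- each new point covered exactly once
    intro i y hy
    rw [Multiset.countP_cons]
    have base : Multiset.countP (fun P => y ∈ P) (F i)
        = Multiset.countP (fun P => y ∈ P) ((F i).erase (g i))
          + if y ∈ g i then 1 else 0 := by
      conv_lhs => rw [← hcons i]
      rw [Multiset.countP_cons]
    by_cases hym : y.val < m
    · have h1 := hG.2.2.1 i y (mem_Dm.2 hym)
      have hyx : y ≠ x := by
        intro e; rw [e, hx] at hym; exact absurd hym (by simp)
      have : (y ∈ insert x (g i)) ↔ y ∈ g i := by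
        simp [Finset.mem_insert, hyx]
      rw [base] at h1
      rcases Decidable.em (y ∈ g i) with hm' | hm' <;>
        simp only [this, hm', if_pos, if_neg, not_false_iff] at h1 ⊢ <;> omega
    · have hym' : y.val = m := by
        have := mem_Dm.1 hy; omega
      have hyx : y = x := Fin.ext hym'
      have hzero : Multiset.countP (fun P => y ∈ P) (F i) = 0 := by
        rw [Multiset.countP_eq_zero]
        intro P hP hyP
        exact absurd (mem_Dm.1 (hG.2.1 i P hP hyP)) (by omega)
      rw [base] at hzero
      have h2 : Multiset.countP (fun P => y ∈ P) ((F i).erase (g i)) = 0 := by omega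
      rw [h2, if_pos (by rw [hyx]; exact Finset.mem_insert_self x (g i))]
  · -- the global count condition
    intro S hS
    by_cases hxS : (x : Fin h) ∈ S
    · -- S contains the new point
      have hS0 : S.erase x ⊆ Dm h m := by
        intro y hy
        have hyS := Finset.mem_of_mem_erase hy
        have hyx := Finset.ne_of_mem_erase hy
        have := mem_Dm.1 (hS hyS)
        rw [mem_Dm]
        rcases Nat.lt_or_ge y.val m with h' | h'
        · exact h'
        · exfalso; exact hyx (Fin.ext (by omega))
      have hcnt0 : ∀ i, (F i).count S = 0 := by
        intro i
        rw [Multiset.count_eq_zero]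
        intro hmem
        exact hxD (hG.2.1 i S hmem hxS)
      have step1 : ∀ i, (insert x (g i) ::ₘ (F i).erase (g i)).count S
          = if g i = S.erase x then 1 else 0 := by
        intro i
        rw [Multiset.count_cons]
        have herase0 : ((F i).erase (g i)).count S = 0 :=
          Nat.eq_zero_of_le_zero ((Multiset.count_le_of_le S (Multiset.erase_le _ _)).trans
            (le_of_eq (hcnt0 i)))
        rw [herase0, Nat.zero_add]
        congr 1
        apply propext
        constructor
        · intro he
          rw [he, Finset.erase_insert (hxg i)]
        · intro he
          rw [he, Finset.insert_erase hxS]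
      rw [Finset.sum_congr rfl (fun i _ => step1 i)]
      rw [← Finset.card_filter, hcount (S.erase x) hS0]
      have hpos : 0 < S.card := Finset.card_pos.2 ⟨x, hxS⟩
      have hcard : (S.erase x).card = S.card - 1 := Finset.card_erase_of_mem hxS
      rw [hd, dd, cnt]
      by_cases hcr : (S.erase x).card < r
      · rw [if_pos hcr, if_pos (by omega)]
        congr 1 <;> omega
      · rw [if_neg hcr, if_neg (by omega)]
    · -- S does not contain the new point
      have hSm : S ⊆ Dm h m := by
        intro y hy
        have := mem_Dm.1 (hS hy)
        rw [mem_Dm]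
        rcases Nat.lt_or_ge y.val m with h' | h'
        · exact h'
        · exfalso; exact hxS (by rwa [show y = x from Fin.ext (by omega)] at hy)
      have step1 : ∀ i, (insert x (g i) ::ₘ (F i).erase (g i)).count S
          = ((F i).erase (g i)).count S := by
        intro i
        rw [Multiset.count_cons, if_neg, Nat.add_zero]
        intro he
        exact hxS (he ▸ Finset.mem_insert_self x (g i))
      have step2 : ∀ i, (F i).count S
          = ((F i).erase (g i)).count S + (if g i = S then 1 else 0) := by
        intro i
        conv_lhs => rw [← hcons i]
        rw [Multiset.count_cons]
        congr 1
        by_cases he : S = g i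
        · rw [if_pos he, if_pos he.symm]
        · rw [if_neg he, if_neg (fun h' => he h'.symm)]
      have hsum2 : (∑ i, ((F i).erase (g i)).count S)
          + (Finset.univ.filter (fun i => g i = S)).card = cnt h r m S := by
        rw [← hG.2.2.2 S hSm, Finset.card_filter, ← Finset.sum_add_distrib]
        apply Finset.sum_congr rfl
        intro i _
        rw [step2 i]
      rw [Finset.sum_congr rfl (fun i _ => step1 i)]
      have hp := pascal (r := r) m hm S
      have hc := hcount S hSm
      rw [hd] at hc
      omega

lemma exists_good (hr : 0 < r) (hdvd : r ∣ h) : ∀ m, m ≤ h → ∃ F, Good h r m F := by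
  intro m
  induction m with
  | zero => exact fun _ => ⟨_, good_zero hr hdvd⟩
  | succ n ih =>
    intro hm
    obtain ⟨F, hF⟩ := ih (by omega)
    exact step hr hdvd (by omega) hF

lemma final_card (hr : 0 < r) {F : Fin (NC h r) → Multiset (Finset (Fin h))}
    (hF : Good h r h F) {i : Fin (NC h r)} {A : Finset (Fin h)} (hA : A ∈ F i) :
    A.card = r := by
  have hsum := hF.2.2.2 A (by rw [Dm_top]; exact Finset.subset_univ A)
  have hpos : 0 < (F i).count A := Multiset.count_pos.2 hA
  have h1 : 0 < cnt h r h A := by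
    rw [← hsum]
    exact lt_of_lt_of_le hpos (Finset.single_le_sum
      (f := fun j => (F j).count A) (fun j _ => Nat.zero_le _) (Finset.mem_univ i))
  rw [cnt, Nat.sub_self] at h1
  by_cases hcle : A.card ≤ r
  · rw [if_pos hcle] at h1
    by_cases hlt : A.card < r
    · rw [Nat.choose_eq_zero_of_lt (by omega)] at h1
      omega
    · omega
  · rw [if_neg hcle] at h1; omega

lemma final_sum (hr : 0 < r) {F : Fin (NC h r) → Multiset (Finset (Fin h))}
    (hF : Good h r h F) {A : Finset (Fin h)} (hA : A.card = r) :
    ∑ i, (F i).count A = 1 := by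
  have hsum := hF.2.2.2 A (by rw [Dm_top]; exact Finset.subset_univ A)
  rw [hsum, cnt, if_pos hA.le, Nat.sub_self, hA, Nat.sub_self, Nat.choose_self]

end Baranyai

/-- (Baranyai, special case.) If `r` divides `h` then the collection of all `r`-subsets of
`[h]` is resolvable, and the number of parallel classes is `C(h-1, r-1)`. -/
theorem stmt7 (h r : ℕ) (hr : 0 < r) (hdvd : r ∣ h) :
    ∃ P : Fin (Nat.choose (h - 1) (r - 1)) → Finset (Finset (Fin h)),
      (∀ i, P i ⊆ Finset.powersetCard r (Finset.univ : Finset (Fin h))) ∧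
      (∀ A ∈ Finset.powersetCard r (Finset.univ : Finset (Fin h)), ∃! i, A ∈ P i) ∧
      (∀ i, ∀ A ∈ P i, ∀ B ∈ P i, A ≠ B → Disjoint A B) ∧
      (∀ i, (P i).biUnion id = Finset.univ) := by
  classical
  obtain ⟨F, hF⟩ := Baranyai.exists_good hr hdvd h le_rfl
  refine ⟨fun i => (F i).toFinset, ?_, ?_, ?_, ?_⟩
  · intro i A hA
    exact Finset.mem_powersetCard.2 ⟨Finset.subset_univ A,
      Baranyai.final_card hr hF (Multiset.mem_toFinset.1 hA)⟩
  · intro A hA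
    have hAr : A.card = r := (Finset.mem_powersetCard.1 hA).2
    have hsum := Baranyai.final_sum hr hF hAr
    have hex : ∃ i, 0 < (F i).count A := by
      by_contra hno
      push_neg at hno
      have : ∑ i, (F i).count A = 0 :=
        Finset.sum_eq_zero (fun i _ => Nat.le_zero.1 (hno i))
      omega
    obtain ⟨i, hi⟩ := hex
    refine ⟨i, Multiset.mem_toFinset.2 (Multiset.count_pos.1 hi), ?_⟩
    intro j hj
    by_contra hne
    have hj' : 0 < (F j).count A := Multiset.count_pos.2 (Multiset.mem_toFinset.1 hj)
    have hle : (F j).count A + (F i).count A ≤ ∑ k, (F k).count A := by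
      have e : ∑ k ∈ ({j, i} : Finset _), (F k).count A = (F j).count A + (F i).count A :=
        Finset.sum_pair hne
      rw [← e]
      exact Finset.sum_le_sum_of_subset (Finset.subset_univ {j, i})
    omega
  · intro i A hA B hB hne
    rw [Finset.disjoint_left]
    intro y hyA hyB
    have h1 := hF.2.2.1 i y (by rw [Baranyai.Dm_top]; exact Finset.mem_univ y)
    have hA' : A ∈ F i := Multiset.mem_toFinset.1 hA
    have hB' : B ∈ F i := Multiset.mem_toFinset.1 hB
    have hBe : B ∈ (F i).erase A := by
      rw [Multiset.mem_erase_of_ne (fun e => hne e.symm)]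
      exact hB'
    have hsplit : Multiset.countP (fun P => y ∈ P) (F i)
        = Multiset.countP (fun P => y ∈ P) ((F i).erase A) + 1 := by
      conv_lhs => rw [← Multiset.cons_erase hA']
      rw [Multiset.countP_cons, if_pos hyA]
    have hpos : 0 < Multiset.countP (fun P => y ∈ P) ((F i).erase A) :=
      Multiset.countP_pos.2 ⟨B, hBe, hyB⟩
    omega
  · intro i
    rw [Finset.eq_univ_iff_forall]
    intro y
    have h1 := hF.2.2.1 i y (by rw [Baranyai.Dm_top]; exact Finset.mem_univ y)
    have hpos : 0 < Multiset.countP (fun P => y ∈ P) (F i) := by omega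
    obtain ⟨A, hAF, hyA⟩ := Multiset.countP_pos.1 hpos
    exact Finset.mem_biUnion.2 ⟨A, Multiset.mem_toFinset.2 hAF, hyA⟩
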